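/- Let L ≥ 2 be an integer and μ_1, …, μ_L, μ_min real numbers with μ_t ≥ μ_min > 0 for all t. Define J(p) = Σ_{t=1}^{L} μ_t (1-p)^{t-1} and F(θ) = J(σ(θ)), and let θ : ℝ → ℝ be differentiable with θ'(s) = F'(θ(s)) for all s ≥ 0. Then θ is strictly decreasing on [0, ∞), and consequently the stopping probability p(s) = σ(θ(s)) is strictly decreasing on [0, ∞). -/

import Mathlib

open Finset

/-- The sigmoid function `σ(θ) = 1 / (1 + exp (-θ))`. -/
noncomputable def sigmoid (x : ℝ) : ℝ := 1 / (1 + Real.exp (-x))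

lemma one_add_exp_pos (x : ℝ) : 0 < 1 + Real.exp (-x) := by positivity

lemma sigmoid_pos (x : ℝ) : 0 < sigmoid x := by
  unfold sigmoid; positivity

lemma sigmoid_lt_one (x : ℝ) : sigmoid x < 1 := by
  unfold sigmoid
  rw [div_lt_one (one_add_exp_pos x)]
  have := Real.exp_pos (-x); linarith

lemma sigmoid_hasDerivAt (x : ℝ) :
    HasDerivAt sigmoid (Real.exp (-x) / (1 + Real.exp (-x)) ^ 2) x := by
  have h1 : HasDerivAt (fun x : ℝ => 1 + Real.exp (-x)) (-Real.exp (-x)) x := by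
    have := (Real.hasDerivAt_exp (-x)).comp x (hasDerivAt_neg x)
    exact ((hasDerivAt_const x (1:ℝ)).add this).congr_deriv (by ring)
  have h := (hasDerivAt_const x (1:ℝ)).div h1 (ne_of_gt (one_add_exp_pos x))
  exact h.congr_deriv (by ring)

lemma sigmoid_strictMono : StrictMono sigmoid := by
  intro a b hab
  unfold sigmoid
  apply one_div_lt_one_div_of_lt (one_add_exp_pos b)
  have : Real.exp (-b) < Real.exp (-a) := Real.exp_lt_exp.mpr (by linarith)
  linarith

/-- Under gradient flow `θ'(s) = F'(θ(s))` with `F(θ) = J(σ(θ))` and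
`J(p) = ∑_{t=1}^L μ_t (1-p)^{t-1}`, `μ_t ≥ μ_min > 0`: `θ` is strictly decreasing
on `[0,∞)`, and consequently the stopping probability `p(s) = σ(θ(s))` is strictly
decreasing on `[0,∞)`. -/
theorem theta_strictAnti
    (L : ℕ) (hL : 2 ≤ L) (μ : ℕ → ℝ) (μmin : ℝ)
    (hμmin : 0 < μmin) (hμ : ∀ t ∈ Finset.Icc 1 L, μmin ≤ μ t)
    (J F : ℝ → ℝ)
    (hJ : ∀ q : ℝ, J q = ∑ t ∈ Finset.Icc 1 L, μ t * (1 - q) ^ (t - 1))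
    (hF : ∀ x : ℝ, F x = J (sigmoid x))
    (θ : ℝ → ℝ) (hθ : Differentiable ℝ θ)
    (hflow : ∀ s : ℝ, 0 ≤ s → deriv θ s = deriv F (θ s))
    (p : ℝ → ℝ) (hp : ∀ s, p s = sigmoid (θ s)) :
    StrictAntiOn θ (Set.Ici (0 : ℝ)) ∧ StrictAntiOn p (Set.Ici (0 : ℝ)) := by
  -- derivative of J
  have hJderiv : ∀ q : ℝ, HasDerivAt J
      (∑ t ∈ Finset.Icc 1 L, μ t * (-(((t - 1 : ℕ) : ℝ) * (1 - q) ^ (t - 1 - 1)))) q := by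
    intro q
    have : HasDerivAt (fun q : ℝ => ∑ t ∈ Finset.Icc 1 L, μ t * (1 - q) ^ (t - 1))
        (∑ t ∈ Finset.Icc 1 L, μ t * (-(((t - 1 : ℕ) : ℝ) * (1 - q) ^ (t - 1 - 1)))) q := by
      apply HasDerivAt.fun_sum
      intro t _
      have hinner : HasDerivAt (fun q : ℝ => 1 - q) (-1) q := by
        exact ((hasDerivAt_const q (1:ℝ)).sub (hasDerivAt_id q)).congr_deriv (by ring)
      have := (hasDerivAt_pow (t - 1) (1 - q)).comp q hinner
      have := this.const_mul (μ t)
      exact this.congr_deriv (by ring)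
    exact this.congr_of_eventuallyEq (by filter_upwards with x using (hJ x))
  -- J' is negative on (0,1)
  have hJneg : ∀ q : ℝ, 0 < q → q < 1 →
      (∑ t ∈ Finset.Icc 1 L, μ t * (-(((t - 1 : ℕ) : ℝ) * (1 - q) ^ (t - 1 - 1)))) < 0 := by
    intro q hq0 hq1
    have h1q : 0 < 1 - q := by linarith
    have hle : ∀ t ∈ Finset.Icc 1 L,
        μ t * (-(((t - 1 : ℕ) : ℝ) * (1 - q) ^ (t - 1 - 1))) ≤ 0 := by
      intro t ht
      have hμt : 0 < μ t := lt_of_lt_of_le hμmin (hμ t ht)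
      have : 0 ≤ ((t - 1 : ℕ) : ℝ) * (1 - q) ^ (t - 1 - 1) := by positivity
      nlinarith
    have h2 : (2 : ℕ) ∈ Finset.Icc 1 L := by
      simp [Finset.mem_Icc]; omega
    have hlt : μ 2 * (-(((2 - 1 : ℕ) : ℝ) * (1 - q) ^ (2 - 1 - 1))) < 0 := by
      have hμt : 0 < μ 2 := lt_of_lt_of_le hμmin (hμ 2 h2)
      norm_num
      exact hμt
    have := Finset.sum_lt_sum (g := fun _ => (0:ℝ)) hle ⟨2, h2, hlt⟩
    simpa using this
  -- derivative of F is negative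
  have hFderiv : ∀ x : ℝ, deriv F x < 0 := by
    intro x
    have hσ := sigmoid_hasDerivAt x
    have hJ' := hJderiv (sigmoid x)
    have hcomp : HasDerivAt F
        ((∑ t ∈ Finset.Icc 1 L, μ t * (-(((t - 1 : ℕ) : ℝ) * (1 - sigmoid x) ^ (t - 1 - 1)))) *
          (Real.exp (-x) / (1 + Real.exp (-x)) ^ 2)) x := by
      have := hJ'.comp x hσ
      exact this.congr_of_eventuallyEq (by filter_upwards with y using (hF y))
    rw [hcomp.deriv]
    apply mul_neg_of_neg_of_pos
    · exact hJneg _ (sigmoid_pos x) (sigmoid_lt_one x)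
    · have := one_add_exp_pos x
      positivity
  -- θ strictly anti
  have hθanti : StrictAntiOn θ (Set.Ici (0 : ℝ)) := by
    apply strictAntiOn_of_deriv_neg (convex_Ici 0) (hθ.continuous.continuousOn)
    intro s hs
    rw [interior_Ici] at hs
    rw [hflow s (le_of_lt hs)]
    exact hFderiv (θ s)
  refine ⟨hθanti, fun a ha b hb hab => ?_⟩
  rw [hp a, hp b]
  exact sigmoid_strictMono (hθanti ha hb hab)
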